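/- Let H be a real Hilbert space, K a nonempty convex subset of H, g : H → H a map, p > 1, μ > 0, and F : H → ℝ Fréchet differentiable. Assume F is sharply higher order strongly general pseudoconvex with constant μ: for all u, v ∈ H with g u, g v ∈ K satisfying ⟨∇F(g u), g v − g u⟩ ≥ 0 and all t ∈ [0,1], F(g v) ≥ F(g v + t·(g u − g v)) + μ·(t^p·(1−t) + t·(1−t)^p)·‖g v − g u‖^p. Then for all u, v ∈ H with g u, g v ∈ K satisfying ⟨∇F(g u), g v − g u⟩ ≥ 0, one has ⟨∇F(g v), g v − g u⟩ ≥ μ·‖g v − g u‖^p. -/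

import Mathlib

/-!
Along the segment `φ t = F (g v + t • (g u - g v))`, sharpness gives
`φ t - φ 0 ≤ -t * μ * (t ^ (p - 1) * (1 - t) + (1 - t) ^ p) * ‖g v - g u‖ ^ p`
for `t ∈ (0, 1]`. Dividing by `t` and letting `t → 0⁺`, where the bracket tends to `1`
because `p > 1`, gives
`φ' 0 = ⟪F' (g v), g u - g v⟫ ≤ -μ * ‖g v - g u‖ ^ p`.
-/

open Filter Topology
open scoped RealInnerProductSpace

theorem HasLineDerivAt.le_neg_of_add_mul_le {E : Type*} [AddCommGroup E] [Module ℝ E]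
    {f : E → ℝ} {f' c₀ : ℝ} {x v : E} {c : ℝ → ℝ} (hf : HasLineDerivAt ℝ f f' x v)
    (hc : Tendsto c (𝓝[>] 0) (𝓝 c₀))
    (hle : ∀ᶠ t in 𝓝[>] 0, f (x + t • v) + t * c t ≤ f x) : f' ≤ -c₀ := by
  refine le_of_tendsto_of_tendsto hf.tendsto_slope_zero_right hc.neg ?_
  filter_upwards [hle, self_mem_nhdsWithin] with t ht (htpos : 0 < t)
  rw [smul_eq_mul, inv_mul_le_iff₀ htpos]
  linarith

theorem Real.rpow_mul_one_sub_add_mul_one_sub_rpow {p t : ℝ} (hp : p ≠ 0) (ht : 0 ≤ t) :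
    t ^ p * (1 - t) + t * (1 - t) ^ p = t * (t ^ (p - 1) * (1 - t) + (1 - t) ^ p) := by
  have htp : t ^ p = t * t ^ (p - 1) := by
    rw [← Real.rpow_one_add' ht (by simpa using hp), add_sub_cancel]
  rw [htp]
  ring

theorem Real.tendsto_rpow_sub_one_mul_one_sub_add_one_sub_rpow {p : ℝ} (hp : 1 < p) :
    Tendsto (fun t : ℝ ↦ t ^ (p - 1) * (1 - t) + (1 - t) ^ p) (𝓝 0) (𝓝 1) := by
  have hcont : ContinuousAt (fun t : ℝ ↦ t ^ (p - 1) * (1 - t) + (1 - t) ^ p) 0 := by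
    fun_prop (disch := first | (right; linarith) | (left; norm_num))
  simpa [Real.zero_rpow (sub_ne_zero.mpr hp.ne')] using hcont.tendsto

theorem stmt_12_general {H : Type*} [NormedAddCommGroup H] [InnerProductSpace ℝ H] [CompleteSpace H]
    (K : Set H)
    (g : H → H) (p μ : ℝ) (hp : 1 < p)
    (F : H → ℝ) (F' : H → H) (hF : ∀ x : H, HasGradientAt F (F' x) x)
    (hsharp : ∀ u v : H, g u ∈ K → g v ∈ K → 0 ≤ ⟪F' (g u), g v - g u⟫ →
      ∀ t ∈ Set.Icc (0 : ℝ) 1,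
        F (g v + t • (g u - g v)) + μ * (t ^ p * (1 - t) + t * (1 - t) ^ p) * ‖g v - g u‖ ^ p
          ≤ F (g v)) :
    ∀ u v : H, g u ∈ K → g v ∈ K → 0 ≤ ⟪F' (g u), g v - g u⟫ →
      μ * ‖g v - g u‖ ^ p ≤ ⟪F' (g v), g v - g u⟫ := by
  intro u v hu hv hinner
  have hline := (hF (g v)).hasFDerivAt.hasLineDerivAt (g u - g v)
  have hcoeff : Tendsto
      (fun t : ℝ ↦ μ * (t ^ (p - 1) * (1 - t) + (1 - t) ^ p) * ‖g v - g u‖ ^ p)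
      (𝓝[>] 0) (𝓝 (μ * 1 * ‖g v - g u‖ ^ p)) :=
    (((Real.tendsto_rpow_sub_one_mul_one_sub_add_one_sub_rpow hp).const_mul μ).mul_const
      _).mono_left nhdsWithin_le_nhds
  have hsmall : ∀ᶠ t in 𝓝[>] 0, F (g v + t • (g u - g v))
      + t * (μ * (t ^ (p - 1) * (1 - t) + (1 - t) ^ p) * ‖g v - g u‖ ^ p) ≤ F (g v) := by
    filter_upwards [Ioc_mem_nhdsGT one_pos] with t ⟨ht0, ht1⟩
    have h := hsharp u v hu hv hinner t ⟨ht0.le, ht1⟩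
    rw [Real.rpow_mul_one_sub_add_mul_one_sub_rpow (by linarith) ht0.le] at h
    linarith
  have hbound := hline.le_neg_of_add_mul_le hcoeff hsmall
  rw [← neg_sub, inner_neg_right, norm_neg, norm_sub_rev]
  simp only [InnerProductSpace.toDual_apply_apply, mul_one] at hbound
  linarith

theorem stmt_12 {H : Type*} [NormedAddCommGroup H] [InnerProductSpace ℝ H] [CompleteSpace H]
    (K : Set H) (hK : K.Nonempty) (hKconv : Convex ℝ K)
    (g : H → H) (p μ : ℝ) (hp : 1 < p) (hμ : 0 < μ)
    (F : H → ℝ) (F' : H → H) (hF : ∀ x : H, HasGradientAt F (F' x) x)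
    (hsharp : ∀ u v : H, g u ∈ K → g v ∈ K → 0 ≤ ⟪F' (g u), g v - g u⟫ →
      ∀ t ∈ Set.Icc (0 : ℝ) 1,
        F (g v + t • (g u - g v)) + μ * (t ^ p * (1 - t) + t * (1 - t) ^ p) * ‖g v - g u‖ ^ p
          ≤ F (g v)) :
    ∀ u v : H, g u ∈ K → g v ∈ K → 0 ≤ ⟪F' (g u), g v - g u⟫ →
      μ * ‖g v - g u‖ ^ p ≤ ⟪F' (g v), g v - g u⟫ :=
  stmt_12_general K g p μ hp F F' hF hsharp
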